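/- If A has a bounded weak approximate identity, then C_BSE(Δ(A)) is unital, its character space Δ(C_BSE(Δ(A))) is weak-* compact, and the weak-* closure of {f_φ : φ ∈ Δ(A)} is contained in Δ(C_BSE(Δ(A))), where f_φ(σ) = σ(φ). -/

import Mathlib

/-!
The bounded weak approximate identity `(xᵢ)` makes `1` a BSE-function:
`|∑ cₖ| = lim |∑ cₖ φₖ(xᵢ)| ≤ β ‖∑ cₖ φₖ‖`. The BSE norm is submultiplicative, so a character
`χ` bounded by `K ‖·‖_BSE` satisfies `|χ σ|ⁿ ≤ K ‖σ‖_BSEⁿ` for all `n`, hence `|χ σ| ≤ ‖σ‖_BSE`;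
in the unital algebra also `χ 1 = 1`. These closed conditions cut `Δ(C_BSE(Δ(A)))` out of the
compact product `∏_σ closedBall 0 ‖σ‖_BSE`, and every `f_φ` satisfies them.
-/

open WeakDual Filter

variable {A : Type*} [NonUnitalNormedCommRing A] [NormedSpace ℂ A]
  [IsScalarTower ℂ A A] [SMulCommClass ℂ A A] [CompleteSpace A]

/-- The BSE inequality for a function on the character space of `A`. -/
def IsBSE (σ : WeakDual.characterSpace ℂ A → ℂ) : Prop :=
  ∃ C > (0 : ℝ), ∀ (n : ℕ) (φ : Fin n → WeakDual.characterSpace ℂ A) (c : Fin n → ℂ),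
    ‖∑ i, c i * σ (φ i)‖ ≤
      C * ‖WeakDual.toStrongDual (∑ i, c i • ((φ i : WeakDual ℂ A)))‖

/-- The BSE norm: the infimum of admissible constants. -/
noncomputable def bseNorm (σ : WeakDual.characterSpace ℂ A → ℂ) : ℝ :=
  sInf {C : ℝ | 0 < C ∧ ∀ (n : ℕ) (φ : Fin n → WeakDual.characterSpace ℂ A) (c : Fin n → ℂ),
    ‖∑ i, c i * σ (φ i)‖ ≤
      C * ‖WeakDual.toStrongDual (∑ i, c i • ((φ i : WeakDual ℂ A)))‖}

variable (A) in
/-- The space `C_BSE(Δ(A))` of BSE-functions, as a subtype of `C_b(Δ(A))`. -/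
abbrev BSEfun :=
  {σ : BoundedContinuousFunction (WeakDual.characterSpace ℂ A) ℂ // IsBSE (⇑σ)}

/-- A character of `C_BSE(Δ(A))`: a nonzero multiplicative linear functional on the
BSE-functions which is bounded with respect to the BSE norm. -/
def IsBSECharacter (χ : BSEfun A → ℂ) : Prop :=
  (∀ σ τ ρ : BSEfun A, (ρ : BoundedContinuousFunction (WeakDual.characterSpace ℂ A) ℂ) =
      ↑σ + ↑τ → χ ρ = χ σ + χ τ) ∧
  (∀ (c : ℂ) (σ ρ : BSEfun A),
    (ρ : BoundedContinuousFunction (WeakDual.characterSpace ℂ A) ℂ) = c • ↑σ →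
      χ ρ = c * χ σ) ∧
  (∀ σ τ ρ : BSEfun A, (ρ : BoundedContinuousFunction (WeakDual.characterSpace ℂ A) ℂ) =
      ↑σ * ↑τ → χ ρ = χ σ * χ τ) ∧
  (∃ σ : BSEfun A, χ σ ≠ 0) ∧
  (∃ K : ℝ, ∀ σ : BSEfun A,
    ‖χ σ‖ ≤ K * bseNorm (⇑(σ : BoundedContinuousFunction (WeakDual.characterSpace ℂ A) ℂ)))

variable (A) in
/-- The character space `Δ(C_BSE(Δ(A)))`, as a set of functionals carrying the topology of
pointwise (weak-*) convergence. -/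
def bseCharSet : Set (BSEfun A → ℂ) := {χ | IsBSECharacter χ}

/-- The evaluation character `f_φ : C_BSE(Δ(A)) → ℂ`, `f_φ(σ) = σ(φ)`. -/
noncomputable def evalBSE (φ : WeakDual.characterSpace ℂ A) : BSEfun A → ℂ :=
  fun σ => (σ : BoundedContinuousFunction (WeakDual.characterSpace ℂ A) ℂ) φ

variable (A) in
/-- The character space of `A` viewed as a subset of the dual `A*` (weak-* topology). -/
def charSet : Set (WeakDual ℂ A) :=
  Set.range ((↑) : WeakDual.characterSpace ℂ A → WeakDual ℂ A)

section

omit [IsScalarTower ℂ A A] [SMulCommClass ℂ A A] [CompleteSpace A]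

lemma toStrongDual_sum_smul_apply {n : ℕ} (c : Fin n → ℂ) (φ : Fin n → characterSpace ℂ A)
    (a : A) :
    toStrongDual (∑ i, c i • (φ i : WeakDual ℂ A)) a = ∑ i, c i * φ i a := by
  simp only [map_sum, map_smul, sum_apply, smul_apply, smul_eq_mul]
  rfl

lemma norm_toStrongDual_sum_smul_apply_smul_le {n : ℕ} (c : Fin n → ℂ)
    (φ : Fin n → characterSpace ℂ A) (a : A) :
    ‖toStrongDual (∑ i, (c i * φ i a) • (φ i : WeakDual ℂ A))‖ ≤
      ‖toStrongDual (∑ i, c i • (φ i : WeakDual ℂ A))‖ * ‖a‖ := by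
  set T := toStrongDual (∑ i, c i • (φ i : WeakDual ℂ A))
  refine ContinuousLinearMap.opNorm_le_bound _ (by positivity) fun b => ?_
  have hmul : ∑ i, c i * φ i a * φ i b = T (a * b) := by
    simp only [T, toStrongDual_sum_smul_apply, map_mul, mul_assoc]
  calc ‖toStrongDual (∑ i, (c i * φ i a) • (φ i : WeakDual ℂ A)) b‖
      = ‖T (a * b)‖ := by rw [toStrongDual_sum_smul_apply, hmul]
    _ ≤ ‖T‖ * (‖a‖ * ‖b‖) := (T.le_opNorm _).trans (by gcongr; exact norm_mul_le a b)
    _ = ‖T‖ * ‖a‖ * ‖b‖ := (mul_assoc _ _ _).symm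

lemma bseNorm_nonneg (σ : characterSpace ℂ A → ℂ) : 0 ≤ bseNorm σ :=
  Real.sInf_nonneg fun _ hC => hC.1.le

lemma bseNorm_le {σ : characterSpace ℂ A → ℂ} {C : ℝ} (hC : 0 < C)
    (h : ∀ (n : ℕ) (φ : Fin n → characterSpace ℂ A) (c : Fin n → ℂ),
      ‖∑ i, c i * σ (φ i)‖ ≤ C * ‖toStrongDual (∑ i, c i • (φ i : WeakDual ℂ A))‖) :
    bseNorm σ ≤ C :=
  csInf_le ⟨0, fun _ hx => hx.1.le⟩ ⟨hC, h⟩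

namespace IsBSE

variable {σ τ : characterSpace ℂ A → ℂ}

lemma norm_sum_le (hσ : IsBSE σ) {n : ℕ} (φ : Fin n → characterSpace ℂ A) (c : Fin n → ℂ) :
    ‖∑ i, c i * σ (φ i)‖ ≤ bseNorm σ * ‖toStrongDual (∑ i, c i • (φ i : WeakDual ℂ A))‖ := by
  obtain ⟨C, hC, hCσ⟩ := hσ
  rcases (norm_nonneg (toStrongDual (∑ i, c i • (φ i : WeakDual ℂ A)))).eq_or_lt with h0 | hpos
  · have := hCσ n φ c
    rw [← h0, mul_zero] at this ⊢
    exact this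
  · rw [← div_le_iff₀ hpos]
    exact le_csInf ⟨C, hC, hCσ⟩ fun D hD => (div_le_iff₀ hpos).2 (hD.2 n φ c)

lemma norm_apply_le (hσ : IsBSE σ) (φ : characterSpace ℂ A) :
    ‖σ φ‖ ≤ bseNorm σ * ‖toStrongDual (φ : WeakDual ℂ A)‖ := by
  simpa using hσ.norm_sum_le (fun _ : Fin 1 => φ) (fun _ => 1)

lemma norm_toStrongDual_sum_smul_le (hτ : IsBSE τ) {n : ℕ} (φ : Fin n → characterSpace ℂ A)
    (c : Fin n → ℂ) :
    ‖toStrongDual (∑ i, (c i * τ (φ i)) • (φ i : WeakDual ℂ A))‖ ≤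
      bseNorm τ * ‖toStrongDual (∑ i, c i • (φ i : WeakDual ℂ A))‖ := by
  refine ContinuousLinearMap.opNorm_le_bound _ (by positivity [bseNorm_nonneg τ]) fun a => ?_
  calc ‖toStrongDual (∑ i, (c i * τ (φ i)) • (φ i : WeakDual ℂ A)) a‖
      = ‖∑ i, (c i * φ i a) * τ (φ i)‖ := by
        simp only [toStrongDual_sum_smul_apply, mul_right_comm]
    _ ≤ bseNorm τ * ‖toStrongDual (∑ i, (c i * φ i a) • (φ i : WeakDual ℂ A))‖ :=
        hτ.norm_sum_le φ _
    _ ≤ bseNorm τ * (‖toStrongDual (∑ i, c i • (φ i : WeakDual ℂ A))‖ * ‖a‖) := by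
        gcongr
        · exact bseNorm_nonneg τ
        · exact norm_toStrongDual_sum_smul_apply_smul_le c φ a
    _ = _ := (mul_assoc _ _ _).symm

lemma norm_sum_mul_le (hσ : IsBSE σ) (hτ : IsBSE τ) {n : ℕ} (φ : Fin n → characterSpace ℂ A)
    (c : Fin n → ℂ) :
    ‖∑ i, c i * (σ (φ i) * τ (φ i))‖ ≤
      bseNorm σ * bseNorm τ * ‖toStrongDual (∑ i, c i • (φ i : WeakDual ℂ A))‖ :=
  calc ‖∑ i, c i * (σ (φ i) * τ (φ i))‖ = ‖∑ i, (c i * τ (φ i)) * σ (φ i)‖ := by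
        simp only [mul_comm (σ _), mul_assoc]
    _ ≤ bseNorm σ * ‖toStrongDual (∑ i, (c i * τ (φ i)) • (φ i : WeakDual ℂ A))‖ :=
        hσ.norm_sum_le φ _
    _ ≤ bseNorm σ * (bseNorm τ * ‖toStrongDual (∑ i, c i • (φ i : WeakDual ℂ A))‖) := by
        gcongr
        · exact bseNorm_nonneg σ
        · exact hτ.norm_toStrongDual_sum_smul_le φ c
    _ = _ := (mul_assoc _ _ _).symm

lemma mul (hσ : IsBSE σ) (hτ : IsBSE τ) : IsBSE fun φ => σ φ * τ φ :=
  ⟨bseNorm σ * bseNorm τ + 1, by positivity [bseNorm_nonneg σ, bseNorm_nonneg τ],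
    fun _ φ c => (hσ.norm_sum_mul_le hτ φ c).trans (by gcongr; linarith)⟩

lemma bseNorm_mul_le (hσ : IsBSE σ) (hτ : IsBSE τ) :
    bseNorm (fun φ => σ φ * τ φ) ≤ bseNorm σ * bseNorm τ := by
  refine le_of_forall_pos_le_add fun ε hε => bseNorm_le ?_ fun _ φ c => ?_
  · positivity [bseNorm_nonneg σ, bseNorm_nonneg τ]
  · exact (hσ.norm_sum_mul_le hτ φ c).trans (by gcongr; linarith)

end IsBSE

lemma isBSE_one_of_tendsto {ι : Type*} {l : Filter ι} [l.NeBot] {x : ι → A} {β : ℝ}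
    (hβ : ∀ i, ‖x i‖ ≤ β) (hx : ∀ φ : characterSpace ℂ A, Tendsto (fun i => φ (x i)) l (nhds 1)) :
    IsBSE fun _ : characterSpace ℂ A => (1 : ℂ) := by
  refine ⟨max β 1, by positivity, fun n φ c => ?_⟩
  set T := toStrongDual (∑ i, c i • (φ i : WeakDual ℂ A))
  have hlim : Tendsto (fun j => T (x j)) l (nhds (∑ i, c i * 1)) := by
    simp only [T, toStrongDual_sum_smul_apply]
    exact tendsto_finsetSum _ fun i _ => (hx (φ i)).const_mul (c i)
  refine le_of_tendsto hlim.norm (Eventually.of_forall fun j => ?_)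
  calc ‖T (x j)‖ ≤ ‖T‖ * ‖x j‖ := T.le_opNorm _
    _ ≤ max β 1 * ‖T‖ := by rw [mul_comm]; gcongr; exact (hβ j).trans (le_max_left _ _)

lemma le_of_forall_pow_succ_le_mul_pow_succ {a b K : ℝ} (hb : 0 ≤ b)
    (h : ∀ n : ℕ, a ^ (n + 1) ≤ K * b ^ (n + 1)) : a ≤ b := by
  by_contra! hba
  rcases hb.eq_or_lt with rfl | hb
  · simpa [hba.not_ge] using h 0
  · obtain ⟨n, hn⟩ := pow_unbounded_of_one_lt K ((one_lt_div hb).2 hba)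
    have hle : (a / b) ^ n ≤ (a / b) ^ (n + 1) :=
      pow_le_pow_right₀ ((one_lt_div hb).2 hba).le n.le_succ
    have hK : (a / b) ^ (n + 1) ≤ K := by
      rw [div_pow, div_le_iff₀ (by positivity)]
      exact h n
    linarith

namespace BSEfun

noncomputable def mul (σ τ : BSEfun A) : BSEfun A := ⟨σ.1 * τ.1, σ.2.mul τ.2⟩

noncomputable def one (h1 : IsBSE fun _ : characterSpace ℂ A => (1 : ℂ)) : BSEfun A := ⟨1, h1⟩

end BSEfun

namespace IsBSECharacter

variable {χ : BSEfun A → ℂ}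

lemma exists_bseNorm_le_pow (hχ : IsBSECharacter χ) (σ : BSEfun A) (n : ℕ) :
    ∃ ρ : BSEfun A, bseNorm ρ.1 ≤ bseNorm σ.1 ^ (n + 1) ∧ χ ρ = χ σ ^ (n + 1) := by
  induction n with
  | zero => exact ⟨σ, (pow_one _).ge, (pow_one _).symm⟩
  | succ n ih =>
    obtain ⟨ρ, hρ, hχρ⟩ := ih
    refine ⟨ρ.mul σ, ?_, ?_⟩
    · calc bseNorm (ρ.mul σ).1 ≤ bseNorm ρ.1 * bseNorm σ.1 := ρ.2.bseNorm_mul_le σ.2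
        _ ≤ bseNorm σ.1 ^ (n + 1) * bseNorm σ.1 := by gcongr; exact bseNorm_nonneg _
        _ = bseNorm σ.1 ^ (n + 1 + 1) := (pow_succ _ _).symm
    · rw [hχ.2.2.1 ρ σ (ρ.mul σ) rfl, hχρ, ← pow_succ]

lemma norm_le_bseNorm (hχ : IsBSECharacter χ) (σ : BSEfun A) : ‖χ σ‖ ≤ bseNorm σ.1 := by
  obtain ⟨K, hK⟩ := hχ.2.2.2.2
  refine le_of_forall_pow_succ_le_mul_pow_succ (K := max K 0) (bseNorm_nonneg _) fun n => ?_
  obtain ⟨ρ, hρ, hχρ⟩ := hχ.exists_bseNorm_le_pow σ n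
  calc ‖χ σ‖ ^ (n + 1) = ‖χ ρ‖ := by rw [hχρ, norm_pow]
    _ ≤ K * bseNorm ρ.1 := hK ρ
    _ ≤ max K 0 * bseNorm σ.1 ^ (n + 1) :=
        mul_le_mul (le_max_left _ _) hρ (bseNorm_nonneg _) (le_max_right _ _)

end IsBSECharacter

section Unital

variable (h1 : IsBSE fun _ : characterSpace ℂ A => (1 : ℂ))
include h1

lemma isBSECharacter_iff {χ : BSEfun A → ℂ} :
    IsBSECharacter χ ↔ (∀ σ τ ρ : BSEfun A, ρ.1 = σ.1 + τ.1 → χ ρ = χ σ + χ τ) ∧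
      (∀ (c : ℂ) (σ ρ : BSEfun A), ρ.1 = c • σ.1 → χ ρ = c * χ σ) ∧
      (∀ σ τ ρ : BSEfun A, ρ.1 = σ.1 * τ.1 → χ ρ = χ σ * χ τ) ∧
      χ (BSEfun.one h1) = 1 ∧ ∀ σ : BSEfun A, ‖χ σ‖ ≤ bseNorm σ.1 := by
  constructor
  · intro hχ
    refine ⟨hχ.1, hχ.2.1, hχ.2.2.1, ?_, hχ.norm_le_bseNorm⟩
    obtain ⟨σ, hσ⟩ := hχ.2.2.2.1
    have := hχ.2.2.1 σ (BSEfun.one h1) σ (mul_one σ.1).symm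
    exact (mul_eq_left₀ hσ).1 this.symm
  · rintro ⟨hadd, hsmul, hmul, hone, hbound⟩
    exact ⟨hadd, hsmul, hmul, ⟨BSEfun.one h1, by simp [hone]⟩, 1, by simpa using hbound⟩

lemma isClosed_bseCharSet : IsClosed (bseCharSet A) := by
  simp only [bseCharSet, isBSECharacter_iff h1, Set.ofPred_and, Set.ofPred_forall]
  refine .inter ?_ (.inter ?_ (.inter ?_ (.inter ?_ ?_))) <;>
    repeat' first
      | refine isClosed_iInter fun _ => ?_
      | exact isClosed_eq (by fun_prop) (by fun_prop)
      | exact isClosed_le (by fun_prop) (by fun_prop)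

lemma isCompact_bseCharSet : IsCompact (bseCharSet A) := by
  have hsub : bseCharSet A ⊆ Set.univ.pi fun σ : BSEfun A => Metric.closedBall 0 (bseNorm σ.1) :=
    fun χ hχ σ _ => mem_closedBall_zero_iff.2 (IsBSECharacter.norm_le_bseNorm hχ σ)
  exact (isCompact_univ_pi fun _ => ProperSpace.isCompact_closedBall _ _).of_isClosed_subset
    (isClosed_bseCharSet h1) hsub

lemma isBSECharacter_evalBSE (φ : characterSpace ℂ A) : IsBSECharacter (evalBSE φ) :=
  ⟨fun _ _ _ h => by simp [evalBSE, h], fun _ _ _ h => by simp [evalBSE, h],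
    fun _ _ _ h => by simp [evalBSE, h], ⟨BSEfun.one h1, by simp [evalBSE, BSEfun.one]⟩,
    ‖toStrongDual (φ : WeakDual ℂ A)‖, fun σ => (σ.2.norm_apply_le φ).trans_eq (mul_comm _ _)⟩

end Unital

end

theorem bwai_unital_compact_closure_subset_general
    (hbwai : ∃ (ι : Type) (P : Preorder ι), Nonempty ι ∧ IsDirected ι (fun a b => P.le a b) ∧
      ∃ (x : ι → A) (β : ℝ), (∀ i, ‖x i‖ ≤ β) ∧
        ∀ φ : WeakDual.characterSpace ℂ A,
          Tendsto (fun i => φ (x i)) (@Filter.atTop ι P) (nhds (1 : ℂ))) :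
    IsBSE (fun _ : WeakDual.characterSpace ℂ A => (1 : ℂ)) ∧
    IsCompact (bseCharSet A) ∧
    closure (Set.range (evalBSE (A := A))) ⊆ bseCharSet A := by
  obtain ⟨ι, P, hne, hdir, x, β, hβ, hx⟩ := hbwai
  let := P
  have : (atTop : Filter ι).NeBot := atTop_neBot_iff.2 ⟨hne, hdir⟩
  have h1 := isBSE_one_of_tendsto hβ hx
  exact ⟨h1, isCompact_bseCharSet h1, closure_minimal
    (Set.range_subset_iff.2 (isBSECharacter_evalBSE h1)) (isClosed_bseCharSet h1)⟩

/-- if `A` has a bounded weak approximate identity, then `C_BSE(Δ(A))` is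
unital (the constant function `1` is a BSE-function), its character space is weak-*
compact, and the weak-* closure of `{f_φ : φ ∈ Δ(A)}` is contained in `Δ(C_BSE(Δ(A)))`. -/
theorem bwai_unital_compact_closure_subset
    (hss : ∀ a : A, (∀ φ : WeakDual.characterSpace ℂ A, φ a = 0) → a = 0)
    (hbwai : ∃ (ι : Type) (P : Preorder ι), Nonempty ι ∧ IsDirected ι (fun a b => P.le a b) ∧
      ∃ (x : ι → A) (β : ℝ), (∀ i, ‖x i‖ ≤ β) ∧
        ∀ φ : WeakDual.characterSpace ℂ A,
          Tendsto (fun i => φ (x i)) (@Filter.atTop ι P) (nhds (1 : ℂ))) :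
    IsBSE (fun _ : WeakDual.characterSpace ℂ A => (1 : ℂ)) ∧
    IsCompact (bseCharSet A) ∧
    closure (Set.range (evalBSE (A := A))) ⊆ bseCharSet A :=
  bwai_unital_compact_closure_subset_general hbwai
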